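/- For every integer s ≥ 2 and every integer r ≥ 4, there exists a finite subset S of F_2^{(s−1)r+s} containing the zero vector such that: (i) the simple graph G on vertex set F_2^{(s−1)r+s}, in which distinct vertices u and w are adjacent if and only if u + w ∈ S, is connected and triangle-free (contains no 3-clique); and (ii) the matrix A over F_2, with rows and columns indexed by F_2^{(s−1)r+s} and entries A_{u,w} = 1 if u + w ∈ S and 0 otherwise, has rank over F_2 at most 2^{(s−1)r} + 2^{(s−2)r+s+1}. Consequently, the binary storage code ker(A) on the N = 2^{(s−1)r+s} vertices of the triangle-free graph G has rate at least 1 − 2^{−s} − 2^{−(r−1)}. -/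

import Mathlib

/-!
Split the coordinates into a head `t ∈ 𝔽₂ˢ` and `s - 1` blocks `u_0, …, u_{s-2} ∈ 𝔽₂ʳ`. The
connection set `S` consists of `0`, the vectors with `t_0 = 1` and all blocks zero, and, for each
`b`, the vectors whose head starts `(0, …, 0, 1)` with the `1` at position `b + 1` and whose blocks
vanish except for a nonzero block `u_b`. Two distinct nonzero elements of `S` never sum into `S`,
so the Cayley graph is triangle-free, and `S` spans, so it is connected.

Modulo 2, `1_S = 1_{u = 0} + ∑_b 1_{C_b}`, where `C_b` is the affine subspace "head starts
`(0, …, 0, 1)` at `b + 1`, blocks other than `u_b` vanish". The matrix `(f (π (u + w)))_{u,w}`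
factors through the target of `π`, so the indicator matrix of an affine subspace of codimension `m`
has rank at most `2ᵐ`. Summing, `rank A ≤ 2^{(s-1)r} + ∑_b 2^{(s-2)r+b+2}`, and rank–nullity
gives the rate.
-/

namespace Matrix

variable {m n K : Type*} [Fintype n] [Field K]

theorem rank_of_apply_add_le_card {A W R : Type*} [Fintype A] [AddZeroClass A] [AddZeroClass W]
    [Fintype W] [DecidableEq W] [CommRing R] [StrongRankCondition R] (π : A →+ W) (f : W → R) :
    (of fun u w => f (π (u + w))).rank ≤ Fintype.card W := by
  have hfactor : (of fun u w => f (π (u + w))) =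
      of (fun u q => f (π u + q)) * of (fun q w => if π w = q then (1 : R) else 0) := by
    ext u w
    simp [mul_apply, map_add]
  rw [hfactor]
  exact (rank_mul_le_left _ _).trans (rank_le_card_width _)

theorem rank_add_le (A B : Matrix m n K) : (A + B).rank ≤ A.rank + B.rank := by
  have h := LinearMap.rank_add_le A.mulVecLin B.mulVecLin
  simp only [LinearMap.rank, ← Module.finrank_eq_rank] at h
  rw [rank, rank, rank, mulVecLin_add]
  exact_mod_cast h

theorem rank_finsetSum_le {η : Type*} (s : Finset η) (A : η → Matrix m n K) :
    (∑ i ∈ s, A i).rank ≤ ∑ i ∈ s, (A i).rank := by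
  classical
  induction s using Finset.induction_on with
  | empty => simp
  | insert i s hi ih =>
    rw [Finset.sum_insert hi, Finset.sum_insert hi]
    exact (rank_add_le _ _).trans (by gcongr)

theorem one_sub_div_card_le_finrank_ker_div_card [Nonempty n] (A : Matrix n n K) {R : ℕ}
    (h : A.rank ≤ R) :
    1 - (R : ℝ) / Fintype.card n ≤
      Module.finrank K (LinearMap.ker A.mulVecLin) / Fintype.card n := by
  have hN : (0 : ℝ) < Fintype.card n := by exact_mod_cast Fintype.card_pos
  have hsum : (A.rank : ℝ) + Module.finrank K (LinearMap.ker A.mulVecLin) = Fintype.card n := by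
    rw [rank]
    exact_mod_cast (LinearMap.finrank_range_add_finrank_ker A.mulVecLin).trans
      (Module.finrank_fintype_fun_eq_card K)
  have hR : (A.rank : ℝ) ≤ R := by exact_mod_cast h
  rw [one_sub_div hN.ne', div_le_div_iff_of_pos_right hN]
  linarith

end Matrix

theorem AddSubgroup.eq_top_of_single_one_mem {ι : Type*} [Fintype ι] [DecidableEq ι] {n : ℕ}
    [NeZero n] {H : AddSubgroup (ι → ZMod n)} (h : ∀ i, Pi.single i 1 ∈ H) : H = ⊤ := by
  refine eq_top_iff.2 fun x _ => ?_
  rw [← Finset.univ_sum_single x]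
  refine sum_mem fun i _ => ?_
  have hsingle : Pi.single i (x i) = (x i).val • (Pi.single i 1 : ι → ZMod n) := by
    rw [← Pi.single_smul, nsmul_eq_mul, mul_one, ZMod.natCast_zmod_val]
  exact hsingle ▸ nsmul_mem (h i) _

namespace SimpleGraph

variable {A : Type*} [AddCommGroup A] [Module (ZMod 2) A] {S : Set A} {G : SimpleGraph A}

theorem connected_of_closure_eq_top (hG : ∀ u w, G.Adj u w ↔ u ≠ w ∧ u + w ∈ S)
    (hS : AddSubgroup.closure S = ⊤) : G.Connected := by
  have hreach : ∀ d ∈ AddSubgroup.closure S, ∀ x, G.Reachable x (x + d) := by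
    intro d hd
    induction hd using AddSubgroup.closure_induction with
    | mem g hg =>
      intro x
      by_cases hg0 : g = 0
      · simp [hg0]
      refine ((hG x (x + g)).2 ⟨by simpa using hg0, ?_⟩).reachable
      rwa [← add_assoc, ZModModule.add_self, zero_add]
    | zero => simp
    | add a b _ _ ha hb => exact fun x => (ha x).trans (by simpa [add_assoc] using hb (x + a))
    | neg a _ ha => simpa [ZModModule.neg_eq_self] using ha
  refine (connected_iff G).2 ⟨fun u v => ?_, ⟨0⟩⟩
  simpa using hreach (v - u) (hS ▸ AddSubgroup.mem_top _) u

theorem cliqueFree_three_of_add_notMem (hG : ∀ u w, G.Adj u w ↔ u ≠ w ∧ u + w ∈ S)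
    (hS : ∀ a ∈ S, ∀ b ∈ S, a ≠ 0 → b ≠ 0 → a ≠ b → a + b ∉ S) : G.CliqueFree 3 := by
  classical
  intro t ht
  obtain ⟨x, y, z, hxy, hxz, hyz, -⟩ := is3Clique_iff.1 ht
  rw [hG] at hxy hxz hyz
  have hsum : (x + y) + (x + z) = y + z := by
    rw [add_comm x y]; exact ZModModule.add_add_add_cancel y x z
  have hne0 {a b : A} (h : a ≠ b) : a + b ≠ 0 := by rwa [← ZModModule.sub_eq_add, sub_ne_zero]
  exact hS _ hxy.2 _ hxz.2 (hne0 hxy.1) (hne0 hxz.1) (mt add_left_cancel hyz.1) (hsum ▸ hyz.2)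

end SimpleGraph

section LeadsAt

variable {α : Type*} [LinearOrder α] {a c : α → ZMod 2} {i j : α}

def LeadsAt (a : α → ZMod 2) (i : α) : Prop := (∀ j < i, a j = 0) ∧ a i = 1

theorem LeadsAt.eq (hi : LeadsAt a i) (hj : LeadsAt a j) : i = j := by
  by_contra h
  rcases lt_or_gt_of_ne h with h | h
  · exact one_ne_zero (hi.2 ▸ hj.1 i h)
  · exact one_ne_zero (hj.2 ▸ hi.1 j h)

theorem LeadsAt.ne_zero (h : LeadsAt a i) : a ≠ 0 := by
  rintro rfl; exact zero_ne_one h.2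

theorem exists_leadsAt [WellFoundedLT α] (ha : a ≠ 0) : ∃ i, LeadsAt a i := by
  obtain ⟨i, hi, hmin⟩ := wellFounded_lt.has_min {j | a j ≠ 0} (Function.ne_iff.1 ha)
  exact ⟨i, fun j hj => not_not.1 fun h => hmin j h hj, Fin.eq_one_of_ne_zero _ hi⟩

theorem LeadsAt.add_of_lt (ha : LeadsAt a i) (hc : LeadsAt c j) (hij : i < j) :
    LeadsAt (a + c) i :=
  ⟨fun l hl => by simp [ha.1 l hl, hc.1 l (hl.trans hij)], by simp [ha.2, hc.1 i hij]⟩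

theorem LeadsAt.add_eq_zero_of_le (ha : LeadsAt a i) (hc : LeadsAt c i) (hj : j ≤ i) :
    (a + c) j = 0 := by
  rcases hj.lt_or_eq with hj | rfl
  · simp [ha.1 j hj, hc.1 j hj]
  · simp only [Pi.add_apply, ha.2, hc.2]; decide

theorem leadsAt_single : LeadsAt (Pi.single i 1) i :=
  ⟨fun _ hj => Pi.single_eq_of_ne hj.ne 1, Pi.single_eq_same i 1⟩

theorem leadsAt_iff_restrict :
    LeadsAt a i ↔
      (fun j : Set.Iic i => a j) = fun j : Set.Iic i => (Pi.single i 1 : α → ZMod 2) j := by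
  constructor
  · rintro ⟨hlt, hi⟩
    funext ⟨j, hj⟩
    rcases (Set.mem_Iic.1 hj).lt_or_eq with hj | rfl
    · simp [hlt j hj, hj.ne]
    · simp [hi]
  · intro h
    refine ⟨fun j hj => ?_, by simpa using congrFun h ⟨i, le_rfl⟩⟩
    simpa [hj.ne] using congrFun h ⟨j, hj.le⟩

end LeadsAt

theorem sum_two_pow_mul_le (k X : ℕ) : ∑ b : Fin k, 2 ^ ((b : ℕ) + 2) * X ≤ 2 ^ (k + 2) * X := by
  have h : ∑ b : Fin k, 2 ^ (b : ℕ) < 2 ^ k := by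
    rw [Fin.sum_univ_eq_sum_range (2 ^ ·) k]
    exact Nat.geomSum_lt le_rfl fun _ => Finset.mem_range.1
  simp only [pow_add, ← Finset.sum_mul]
  exact Nat.mul_le_mul_right _ (Nat.mul_le_mul_right _ h.le)

namespace StorageCode

variable {k r : ℕ} {ι : Type*} (e : Fin (k + 1) ⊕ Fin k × Fin r ≃ ι)

def head : (ι → ZMod 2) →+ (Fin (k + 1) → ZMod 2) where
  toFun x i := x (e (.inl i))
  map_zero' := rfl
  map_add' _ _ := rfl

def blocks : (ι → ZMod 2) →+ (Fin k → Fin r → ZMod 2) where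
  toFun x b j := x (e (.inr (b, j)))
  map_zero' := rfl
  map_add' _ _ := rfl

@[simp] theorem head_apply (x : ι → ZMod 2) (i : Fin (k + 1)) : head e x i = x (e (.inl i)) :=
  rfl

@[simp] theorem blocks_apply (x : ι → ZMod 2) (b : Fin k) (j : Fin r) :
    blocks e x b j = x (e (.inr (b, j))) := rfl

def IsLevel (i : Fin (k + 1)) (x : ι → ZMod 2) : Prop :=
  LeadsAt (head e x) i ∧ (∀ b : Fin k, b.succ ≠ i → blocks e x b = 0) ∧ (i ≠ 0 → blocks e x ≠ 0)

def connectionSet : Set (ι → ZMod 2) := {x | x = 0 ∨ ∃ i, IsLevel e i x}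

def InCoset (b : Fin k) (x : ι → ZMod 2) : Prop :=
  LeadsAt (head e x) b.succ ∧ ∀ b' ≠ b, blocks e x b' = 0

def cosetProj (b : Fin k) :
    (ι → ZMod 2) →+ (Set.Iic b.succ → ZMod 2) × ({b' // b' ≠ b} → Fin r → ZMod 2) where
  toFun x := (fun i => head e x i, fun b' => blocks e x b')
  map_zero' := rfl
  map_add' _ _ := rfl

variable {e}

theorem eq_zero_iff {x : ι → ZMod 2} : x = 0 ↔ head e x = 0 ∧ blocks e x = 0 := by
  refine ⟨by rintro rfl; simp, fun ⟨hh, hb⟩ => funext fun i => ?_⟩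
  rw [← e.apply_symm_apply i]
  rcases e.symm i with i | ⟨b, j⟩
  · exact congrFun hh i
  · exact congrFun (congrFun hb b) j

theorem IsLevel.exists_blocks_ne_zero {i : Fin (k + 1)} {x : ι → ZMod 2} (hx : IsLevel e i x)
    (hi : i ≠ 0) : ∃ b : Fin k, b.succ = i ∧ blocks e x b ≠ 0 := by
  obtain ⟨b, hb⟩ := Function.ne_iff.1 (hx.2.2 hi)
  exact ⟨b, not_not.1 fun h => hb (hx.2.1 b h), hb⟩

theorem add_notMem_connectionSet_of_lt {i j : Fin (k + 1)} {x y : ι → ZMod 2}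
    (hx : IsLevel e i x) (hy : IsLevel e j y) (hij : i < j) : x + y ∉ connectionSet e := by
  have hlead : LeadsAt (head e (x + y)) i := by
    rw [map_add]; exact hx.1.add_of_lt hy.1 hij
  rintro (h0 | ⟨i', hxy⟩)
  · exact hlead.ne_zero (by simp [h0])
  obtain rfl := hlead.eq hxy.1
  obtain ⟨b, rfl, hb⟩ := hy.exists_blocks_ne_zero (ne_bot_of_gt hij)
  exact hb (by simpa [hx.2.1 b hij.ne'] using hxy.2.1 b hij.ne')

theorem add_notMem_connectionSet_of_eq {i : Fin (k + 1)} {x y : ι → ZMod 2} (hx : IsLevel e i x)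
    (hy : IsLevel e i y) (hxy : x ≠ y) : x + y ∉ connectionSet e := by
  rintro (h0 | ⟨i', hsum⟩)
  · exact hxy (by rwa [← ZModModule.sub_eq_add, sub_eq_zero] at h0)
  have hlt : i < i' := lt_of_not_ge fun h => by
    have := hsum.1.2
    rw [map_add, hx.1.add_eq_zero_of_le hy.1 h] at this
    exact zero_ne_one this
  obtain ⟨b, rfl, hb⟩ := hsum.exists_blocks_ne_zero (ne_bot_of_gt hlt)
  exact hb (by simp [hx.2.1 b hlt.ne', hy.2.1 b hlt.ne'])

theorem add_notMem_connectionSet {x y : ι → ZMod 2} (hx : x ∈ connectionSet e)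
    (hy : y ∈ connectionSet e) (hx0 : x ≠ 0) (hy0 : y ≠ 0) (hxy : x ≠ y) :
    x + y ∉ connectionSet e := by
  obtain ⟨i, hx⟩ := hx.resolve_left hx0
  obtain ⟨j, hy⟩ := hy.resolve_left hy0
  rcases lt_trichotomy i j with hij | rfl | hij
  · exact add_notMem_connectionSet_of_lt hx hy hij
  · exact add_notMem_connectionSet_of_eq hx hy hxy
  · exact add_comm x y ▸ add_notMem_connectionSet_of_lt hy hx hij

section single

variable [DecidableEq ι]

@[simp] theorem head_single_inl (i : Fin (k + 1)) :
    head e (Pi.single (e (.inl i)) 1) = Pi.single i 1 := by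
  ext i'; simp [Pi.single_apply]

@[simp] theorem blocks_single_inl (i : Fin (k + 1)) : blocks e (Pi.single (e (.inl i)) 1) = 0 := by
  ext b j; simp

@[simp] theorem head_single_inr (b : Fin k) (j : Fin r) :
    head e (Pi.single (e (.inr (b, j))) 1) = 0 := by
  ext i'; simp

@[simp] theorem blocks_single_inr (b : Fin k) (j : Fin r) :
    blocks e (Pi.single (e (.inr (b, j))) 1) = Pi.single b (Pi.single j 1) := by
  ext b' j'; by_cases hb : b' = b <;> by_cases hj : j' = j <;> simp [hb, hj]

end single

theorem closure_connectionSet [Fintype ι] [DecidableEq ι] :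
    AddSubgroup.closure (connectionSet e) = ⊤ := by
  have h0 : Pi.single (e (.inl 0)) 1 ∈ AddSubgroup.closure (connectionSet e) :=
    AddSubgroup.subset_closure (Or.inr ⟨0, by simp [IsLevel, leadsAt_single]⟩)
  have hinl (i : Fin (k + 1)) :
      Pi.single (e (.inl i)) 1 ∈ AddSubgroup.closure (connectionSet e) := by
    rcases eq_or_ne i 0 with rfl | hi
    · exact h0
    refine (add_mem_cancel_left h0).1
      (AddSubgroup.subset_closure (Or.inr ⟨0, ?_, by simp, by simp⟩))
    simpa using leadsAt_single.add_of_lt leadsAt_single (Fin.pos_of_ne_zero hi)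
  refine AddSubgroup.eq_top_of_single_one_mem fun i => ?_
  rw [← e.apply_symm_apply i]
  rcases e.symm i with i | ⟨b, j⟩
  · exact hinl i
  refine (add_mem_cancel_left (hinl b.succ)).1
    (AddSubgroup.subset_closure (Or.inr ⟨b.succ, ?_, fun b' hb' => ?_, ?_⟩))
  · simpa using leadsAt_single
  · simp [Pi.single_eq_of_ne (mt (congrArg Fin.succ) hb')]
  · simp

theorem InCoset.eq {b b' : Fin k} {x : ι → ZMod 2} (h : InCoset e b x) (h' : InCoset e b' x) :
    b = b' :=
  Fin.succ_injective _ (h.1.eq h'.1)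

theorem mem_connectionSet_iff {x : ι → ZMod 2} :
    x ∈ connectionSet e ↔ (blocks e x = 0 ↔ ¬ ∃ b, InCoset e b x) := by
  by_cases hb : blocks e x = 0
  · simp only [hb, true_iff]
    constructor
    · rintro (rfl | ⟨i, hi⟩) ⟨b, hb'⟩
      · exact hb'.1.ne_zero (map_zero _)
      · obtain rfl : i = 0 := not_not.1 fun h => hi.2.2 h hb
        exact Fin.succ_ne_zero b (hb'.1.eq hi.1)
    · intro hno
      by_cases hh : head e x = 0
      · exact Or.inl (eq_zero_iff.2 ⟨hh, hb⟩)
      obtain ⟨i, hi⟩ := exists_leadsAt hh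
      induction i using Fin.cases with
      | zero => exact Or.inr ⟨0, hi, fun _ _ => by simp [hb], absurd rfl⟩
      | succ b => exact absurd ⟨b, hi, fun _ _ => by simp [hb]⟩ hno
  · simp only [hb, false_iff, not_not]
    constructor
    · rintro (rfl | ⟨i, hi⟩)
      · exact absurd (map_zero _) hb
      induction i using Fin.cases with
      | zero => exact absurd (funext fun b => hi.2.1 b (Fin.succ_ne_zero b)) hb
      | succ b => exact ⟨b, hi.1, fun b' hb' => hi.2.1 b' (Fin.succ_injective _ |>.ne hb')⟩
    · rintro ⟨b, hl, hs⟩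
      exact Or.inr ⟨b.succ, hl, fun b' h => hs b' (mt (congrArg Fin.succ) h), fun _ => hb⟩

open Classical in
theorem indicator_connectionSet (x : ι → ZMod 2) :
    (if x ∈ connectionSet e then 1 else 0 : ZMod 2) =
      (if blocks e x = 0 then 1 else 0) + ∑ b, if InCoset e b x then 1 else 0 := by
  have hsum : (∑ b, if InCoset e b x then (1 : ZMod 2) else 0) =
      if ∃ b, InCoset e b x then 1 else 0 := by
    split_ifs with h
    · obtain ⟨b, hb⟩ := h
      rw [Fintype.sum_eq_single b fun b' hb' => if_neg fun h' => hb' (h'.eq hb), if_pos hb]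
    · exact Finset.sum_eq_zero fun b _ => if_neg fun h' => h ⟨b, h'⟩
  rw [hsum, mem_connectionSet_iff]
  by_cases h₁ : blocks e x = 0 <;> by_cases h₂ : ∃ b, InCoset e b x <;>
    simp [h₁, h₂, CharTwo.add_self_eq_zero]

theorem inCoset_iff_cosetProj {b : Fin k} {x : ι → ZMod 2} :
    InCoset e b x ↔ cosetProj e b x =
      (fun i : Set.Iic b.succ => (Pi.single b.succ 1 : Fin (k + 1) → ZMod 2) i, 0) := by
  rw [InCoset, leadsAt_iff_restrict, Prod.ext_iff]
  simp [cosetProj, funext_iff]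

variable [Fintype ι] [DecidableEq ι]

theorem rank_blocks_eq_zero_le :
    (Matrix.of fun u w => if blocks e (u + w) = 0 then (1 : ZMod 2) else 0).rank ≤ 2 ^ (k * r) := by
  have := Matrix.rank_of_apply_add_le_card (blocks e) fun v => if v = 0 then (1 : ZMod 2) else 0
  simpa [← pow_mul, mul_comm] using this

open Classical in
theorem rank_inCoset_le (b : Fin k) :
    (Matrix.of fun u w => if InCoset e b (u + w) then (1 : ZMod 2) else 0).rank ≤
      2 ^ ((b : ℕ) + 2) * 2 ^ ((k - 1) * r) := by
  have := Matrix.rank_of_apply_add_le_card (cosetProj e b) fun p =>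
    if p = (fun i : Set.Iic b.succ => (Pi.single b.succ 1 : Fin (k + 1) → ZMod 2) i, 0) then
      (1 : ZMod 2) else 0
  simp only [← inCoset_iff_cosetProj] at this
  convert this using 1
  simp [← pow_mul]
  ring

open Classical in
theorem rank_connectionSet_le :
    (Matrix.of fun u w => if u + w ∈ connectionSet e then (1 : ZMod 2) else 0).rank ≤
      2 ^ (k * r) + 2 ^ ((k - 1) * r + k + 2) := by
  have hdecomp : (Matrix.of fun u w => if u + w ∈ connectionSet e then (1 : ZMod 2) else 0) =
      (Matrix.of fun u w => if blocks e (u + w) = 0 then 1 else 0) +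
        ∑ b, Matrix.of fun u w => if InCoset e b (u + w) then 1 else 0 := by
    ext u w
    simp [Matrix.sum_apply, indicator_connectionSet]
  rw [hdecomp]
  refine (Matrix.rank_add_le _ _).trans (add_le_add rank_blocks_eq_zero_le ?_)
  calc _ ≤ ∑ b : Fin k,
          (Matrix.of fun u w => if InCoset e b (u + w) then (1 : ZMod 2) else 0).rank :=
        Matrix.rank_finsetSum_le _ _
    _ ≤ ∑ b : Fin k, 2 ^ ((b : ℕ) + 2) * 2 ^ ((k - 1) * r) :=
        Finset.sum_le_sum fun b _ => rank_inCoset_le b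
    _ ≤ 2 ^ ((k - 1) * r + k + 2) := by
        rw [add_assoc, pow_add, mul_comm (2 ^ ((k - 1) * r))]
        exact sum_two_pow_mul_le k _

end StorageCode

theorem two_pow_add_two_pow_div_two_pow {s r : ℕ} (hs : 2 ≤ s) :
    ((2 ^ ((s - 1) * r) + 2 ^ ((s - 2) * r + s + 1) : ℕ) : ℝ) / 2 ^ ((s - 1) * r + s) =
      2 ^ (-(s : ℤ)) + 2 ^ (-((r : ℤ) - 1)) := by
  push_cast
  rw [add_div]
  congr 1 <;> rw [← zpow_natCast, ← zpow_natCast, ← zpow_sub₀ two_ne_zero] <;> congr 1 <;>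
    push_cast [Nat.cast_sub (show 1 ≤ s by omega), Nat.cast_sub hs] <;> ring

open StorageCode in
theorem exists_high_rate_storage_codes_general (s r : ℕ) (hs : 2 ≤ s) :
    ∃ S : Finset (Fin ((s - 1) * r + s) → ZMod 2),
      (0 : Fin ((s - 1) * r + s) → ZMod 2) ∈ S ∧
      (∀ G : SimpleGraph (Fin ((s - 1) * r + s) → ZMod 2),
        (∀ u w, G.Adj u w ↔ u ≠ w ∧ u + w ∈ S) →
          G.Connected ∧ G.CliqueFree 3) ∧
      (Matrix.of fun u w => if u + w ∈ S then (1 : ZMod 2) else 0).rank ≤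
        2 ^ ((s - 1) * r) + 2 ^ ((s - 2) * r + s + 1) ∧
      (Module.finrank (ZMod 2)
          (LinearMap.ker
            (Matrix.of fun u w => if u + w ∈ S then (1 : ZMod 2) else 0).mulVecLin) : ℝ) /
          2 ^ ((s - 1) * r + s) ≥
        1 - (2 : ℝ) ^ (-(s : ℤ)) - (2 : ℝ) ^ (-((r : ℤ) - 1)) := by
  classical
  let e : Fin (s - 1 + 1) ⊕ Fin (s - 1) × Fin r ≃ Fin ((s - 1) * r + s) :=
    (Equiv.sumComm _ _).trans <| (finProdFinEquiv.sumCongr (Equiv.refl _)).trans <|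
      finSumFinEquiv.trans (finCongr (by omega))
  have hrank :
      (Matrix.of fun u w => if u + w ∈ (connectionSet e).toFinset then (1 : ZMod 2) else 0).rank ≤
        2 ^ ((s - 1) * r) + 2 ^ ((s - 2) * r + s + 1) := by
    have h := rank_connectionSet_le (e := e)
    rw [show (s - 1 - 1) * r + (s - 1) + 2 = (s - 2) * r + s + 1 by
      rw [show s - 1 - 1 = s - 2 by omega]; omega] at h
    simpa only [Set.mem_toFinset] using h
  refine ⟨(connectionSet e).toFinset, Set.mem_toFinset.2 (Or.inl rfl), fun G hG => ⟨?_, ?_⟩,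
    hrank, ?_⟩
  · exact SimpleGraph.connected_of_closure_eq_top (by simpa using hG) closure_connectionSet
  · exact SimpleGraph.cliqueFree_three_of_add_notMem (by simpa using hG)
      fun a ha b hb => add_notMem_connectionSet ha hb
  · have h := Matrix.one_sub_div_card_le_finrank_ker_div_card _ hrank
    rwa [Fintype.card_fun, ZMod.card, Fintype.card_fin, Nat.cast_pow, Nat.cast_two,
      two_pow_add_two_pow_div_two_pow hs, ← sub_sub] at h

theorem exists_high_rate_storage_codes (s r : ℕ) (hs : 2 ≤ s) (hr : 4 ≤ r) :
    ∃ S : Finset (Fin ((s - 1) * r + s) → ZMod 2),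
      (0 : Fin ((s - 1) * r + s) → ZMod 2) ∈ S ∧
      (∀ G : SimpleGraph (Fin ((s - 1) * r + s) → ZMod 2),
        (∀ u w, G.Adj u w ↔ u ≠ w ∧ u + w ∈ S) →
          G.Connected ∧ G.CliqueFree 3) ∧
      (Matrix.of fun u w => if u + w ∈ S then (1 : ZMod 2) else 0).rank ≤
        2 ^ ((s - 1) * r) + 2 ^ ((s - 2) * r + s + 1) ∧
      (Module.finrank (ZMod 2)
          (LinearMap.ker
            (Matrix.of fun u w => if u + w ∈ S then (1 : ZMod 2) else 0).mulVecLin) : ℝ) /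
          2 ^ ((s - 1) * r + s) ≥
        1 - (2 : ℝ) ^ (-(s : ℤ)) - (2 : ℝ) ^ (-((r : ℤ) - 1)) :=
  exists_high_rate_storage_codes_general s r hs
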